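/- Let α, β ∈ k with 2β = 0 in k. Then the ideal I = (t⁶ + αt¹⁰, t⁹ + βt¹⁰) of A = k⟦t⁵, t⁶, t⁹⟧ is an Ulrich ideal of A. -/

import Mathlib

noncomputable section

open PowerSeries

set_option synthInstance.maxHeartbeats 400000
set_option maxHeartbeats 800000

variable (k : Type*) [Field k]

/-- The subalgebra of `k⟦t⟧` consisting of power series supported on an
additive submonoid `S ⊆ ℕ` (the "semigroup ring" of `S`). -/
def semigroupRing (S : AddSubmonoid ℕ) : Subalgebra k (PowerSeries k) where
  carrier := {f | ∀ n : ℕ, coeff n f ≠ 0 → n ∈ S}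
  zero_mem' := by intro n hn; simp at hn
  add_mem' := by
    intro f g hf hg n hn
    by_contra h
    exact hn (by
      rw [map_add, of_not_not fun h1 => h (hf n h1), of_not_not fun h2 => h (hg n h2), add_zero])
  one_mem' := by
    intro n hn
    rw [coeff_one] at hn
    simp only [ne_eq, ite_eq_right_iff, not_forall] at hn
    exact hn.1 ▸ S.zero_mem
  mul_mem' := by
    intro f g hf hg n hn
    rw [coeff_mul] at hn
    obtain ⟨p, hp, hne⟩ := Finset.exists_ne_zero_of_sum_ne_zero hn
    have hp : p.1 + p.2 = n := by simpa using hp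
    exact hp ▸ S.add_mem (hf p.1 (left_ne_zero_of_mul hne)) (hg p.2 (right_ne_zero_of_mul hne))
  algebraMap_mem' := by
    intro a n hn
    have : (algebraMap k (PowerSeries k)) a = C a := rfl
    rw [this, coeff_C] at hn
    simp only [ne_eq, ite_eq_right_iff, not_forall] at hn
    exact hn.1 ▸ S.zero_mem

lemma X_pow_mem {S : AddSubmonoid ℕ} {n : ℕ} (hn : n ∈ S) :
    (X : PowerSeries k) ^ n ∈ semigroupRing k S := by
  intro m hm
  rw [coeff_X_pow] at hm
  simp only [ne_eq, ite_eq_right_iff, not_forall] at hm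
  exact hm.1 ▸ hn

/-- The maximal ideal of a subalgebra of `k⟦t⟧`: the kernel of the constant-coefficient map. -/
def maximalIdealOf (A : Subalgebra k (PowerSeries k)) : Ideal A :=
  RingHom.ker ((constantCoeff (R := k)).comp A.val.toRingHom)

/-- `I` is an Ulrich ideal of `A`: `I` is `m`-primary, and there is `a ∈ I` such that `(a)`
is a reduction of `I`, `I ≠ (a)`, `I² = aI`, and `I/I²` is a free `A/I`-module. -/
def IsUlrichIdeal (A : Subalgebra k (PowerSeries k)) (I : Ideal A) : Prop :=
  I.IsPrimary ∧ I.radical = maximalIdealOf k A ∧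
  ∃ a ∈ I, (∃ n : ℕ, I ^ (n + 1) = Ideal.span {a} * I ^ n) ∧
    I ≠ Ideal.span {a} ∧
    I ^ 2 = Ideal.span {a} * I ∧
    Module.Free (A ⧸ I) I.Cotangent

/-- `A = k⟦t⁵,t⁶,t⁹⟧`. -/
def A569 : Subalgebra k (PowerSeries k) :=
  semigroupRing k (AddSubmonoid.closure ({5, 6, 9} : Set ℕ))

lemma mem569 {n : ℕ} (a b c : ℕ) (h : a * 5 + b * 6 + c * 9 = n) :
    n ∈ AddSubmonoid.closure ({5, 6, 9} : Set ℕ) := by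
  subst h
  have h5 : (5 : ℕ) ∈ AddSubmonoid.closure ({5, 6, 9} : Set ℕ) :=
    AddSubmonoid.subset_closure (by norm_num)
  have h6 : (6 : ℕ) ∈ AddSubmonoid.closure ({5, 6, 9} : Set ℕ) :=
    AddSubmonoid.subset_closure (by norm_num)
  have h9 : (9 : ℕ) ∈ AddSubmonoid.closure ({5, 6, 9} : Set ℕ) :=
    AddSubmonoid.subset_closure (by norm_num)
  simpa [smul_eq_mul] using
    add_mem (add_mem (nsmul_mem h5 a) (nsmul_mem h6 b)) (nsmul_mem h9 c)

/-- `t⁶ + αt¹⁰` as an element of `A = k⟦t⁵,t⁶,t⁹⟧`. -/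
def f569 (α : k) : A569 k :=
  ⟨X ^ 6 + α • X ^ 10, by
    refine add_mem (X_pow_mem k (mem569 0 1 0 (by norm_num)))
      (Subalgebra.smul_mem _ (X_pow_mem k (mem569 2 0 0 (by norm_num))) α)⟩

/-- `t⁹ + βt¹⁰` as an element of `A = k⟦t⁵,t⁶,t⁹⟧`. -/
def g569 (β : k) : A569 k :=
  ⟨X ^ 9 + β • X ^ 10, by
    refine add_mem (X_pow_mem k (mem569 0 0 1 (by norm_num)))
      (Subalgebra.smul_mem _ (X_pow_mem k (mem569 2 0 0 (by norm_num))) β)⟩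

/-! Write `f = t⁶u` with `u = 1 + αt⁴` a unit of `k⟦t⟧`. As `t¹⁴k⟦t⟧ ⊆ A`, every element of
`A` of order `≥ 20` is a multiple of `f`, and the elements `tʲf`, `tʲg` (`j ∈ H = ⟨5, 6, 9⟩`)
realise every order in `H` from `11` to `19`; so `I` contains all elements of `A` of order `≥ 11`,
and `y ∈ A` lies in `I` as soon as `y₀ = y₅ = 0` and `y₁₀ = αy₆ + βy₉`. Now `g²/f = t¹²(1 + βt)²u⁻¹`
has no `t¹³` term because `2β = 0`, so it lies in `I` and `I² = fI`. Finally, if `rf + sg = fz`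
with `z ∈ I`, comparing coefficients of `sg = (z - r)f` in a few degrees shows `r, s ∈ I`: `f, g`
is a basis of `I/I²`. -/

variable {k}

section PowerSeries

lemma X_pow_succ_dvd_of_coeff_eq_zero {n : ℕ} {p : PowerSeries k} (hp : X ^ n ∣ p)
    (hn : coeff n p = 0) : X ^ (n + 1) ∣ p := by
  refine X_pow_dvd_iff.mpr fun m hm => ?_
  rcases Nat.lt_succ_iff_lt_or_eq.mp hm with hm | rfl
  · exact X_pow_dvd_iff.mp hp m hm
  · exact hn

lemma coeff_mul_X_pow_add_C_mul_X_pow (p : PowerSeries k) (a b n : ℕ) (c : k) :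
    coeff n (p * (X ^ a + C c * X ^ b)) =
      (if a ≤ n then coeff (n - a) p else 0) + c * (if b ≤ n then coeff (n - b) p else 0) := by
  rw [mul_add, mul_left_comm, map_add, coeff_C_mul, coeff_mul_X_pow', coeff_mul_X_pow']

lemma one_add_C_mul_X_pow_mul_inv (c : k) {i : ℕ} (hi : i ≠ 0) :
    (1 + C c * X ^ i) * (1 + C c * X ^ i)⁻¹ = 1 :=
  PowerSeries.mul_inv_cancel _ (by simp [hi])

end PowerSeries

lemma maximalIdealOf_isMaximal (A : Subalgebra k (PowerSeries k)) :
    (maximalIdealOf k A).IsMaximal :=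
  RingHom.ker_isMaximal_of_surjective _ fun c => ⟨algebraMap k A c, by simp⟩

section SemigroupRing

variable {S : AddSubmonoid ℕ}

lemma coeff_eq_zero_of_mem_semigroupRing {p : PowerSeries k} (hp : p ∈ semigroupRing k S)
    {n : ℕ} (hn : n ∉ S) : coeff n p = 0 :=
  not_not.mp fun h => hn (hp n h)

lemma mem_semigroupRing_of_X_pow_dvd {c : ℕ} (hc : ∀ n, c ≤ n → n ∈ S) {p : PowerSeries k}
    (hp : X ^ c ∣ p) : p ∈ semigroupRing k S := fun n hn =>
  hc n (not_lt.mp fun h => hn (X_pow_dvd_iff.mp hp n h))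

lemma exists_mem_X_pow_dvd_coeff_eq_one {I : Ideal (semigroupRing k S)} {a : semigroupRing k S}
    (ha : a ∈ I) {i j : ℕ} {u : PowerSeries k} (hau : (a : PowerSeries k) = X ^ i * u)
    (hu : constantCoeff u = 1) (hj : j ∈ S) :
    ∃ e ∈ I, X ^ (j + i) ∣ (e : PowerSeries k) ∧ coeff (j + i) (e : PowerSeries k) = 1 := by
  have he : ((⟨X ^ j, X_pow_mem k hj⟩ * a : semigroupRing k S) : PowerSeries k)
      = X ^ (j + i) * u := by
    rw [Subalgebra.coe_mul, hau, pow_add, mul_assoc]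
  refine ⟨_, I.mul_mem_left _ ha, he ▸ dvd_mul_right _ _, ?_⟩
  simpa [he, hu] using coeff_X_pow_mul u (j + i) 0

lemma mem_of_X_pow_dvd_of_forall_exists {I : Ideal (semigroupRing k S)} {n N : ℕ}
    (hN : ∀ z : semigroupRing k S, X ^ N ∣ (z : PowerSeries k) → z ∈ I)
    (hval : ∀ m, n ≤ m → m < N → m ∈ S →
      ∃ e ∈ I, X ^ m ∣ (e : PowerSeries k) ∧ coeff m (e : PowerSeries k) = 1)
    (z : semigroupRing k S) (hz : X ^ n ∣ (z : PowerSeries k)) : z ∈ I := by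
  induction h : N - n generalizing n z with
  | zero => exact hN z ((pow_dvd_pow X (by omega)).trans hz)
  | succ d ih =>
    have step : ∀ z : semigroupRing k S, X ^ (n + 1) ∣ (z : PowerSeries k) → z ∈ I :=
      fun z hz => ih (fun m hm => hval m (by omega)) z hz (by omega)
    by_cases hn : n ∈ S
    · obtain ⟨e, heI, hedvd, he⟩ := hval n le_rfl (by omega) hn
      have hsub : z - coeff n (z : PowerSeries k) • e ∈ I := by
        refine step _ (X_pow_succ_dvd_of_coeff_eq_zero ?_ ?_)
        · exact dvd_sub hz (by simpa [Subalgebra.coe_smul] using dvd_smul_of_dvd _ hedvd)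
        · simp [he]
      simpa using I.add_mem hsub (Submodule.smul_of_tower_mem I (coeff n (z : PowerSeries k)) heI)
    · exact step z (X_pow_succ_dvd_of_coeff_eq_zero hz
        (coeff_eq_zero_of_mem_semigroupRing z.2 hn))

end SemigroupRing

lemma Ideal.free_cotangent_of_span_pair {R : Type*} [CommRing R] {a b : R}
    (h : ∀ r s : R, r * a + s * b ∈ Ideal.span {a, b} ^ 2 →
      r ∈ Ideal.span {a, b} ∧ s ∈ Ideal.span {a, b}) :
    Module.Free (R ⧸ Ideal.span {a, b}) (Ideal.span {a, b}).Cotangent := by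
  set I : Ideal R := Ideal.span {a, b}
  have ha : a ∈ I := Ideal.subset_span (Set.mem_insert _ _)
  have hb : b ∈ I := Ideal.subset_span (Set.mem_insert_of_mem _ rfl)
  let e : Fin 2 → I.Cotangent := ![I.toCotangent ⟨a, ha⟩, I.toCotangent ⟨b, hb⟩]
  have hsmul : ∀ (r : R) (ξ : I.Cotangent), Ideal.Quotient.mk I r • ξ = r • ξ := fun _ _ => rfl
  have hspan : ⊤ ≤ Submodule.span (R ⧸ I) (Set.range e) := by
    rintro ξ -
    obtain ⟨⟨x, hx⟩, rfl⟩ := I.toCotangent_surjective ξ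
    obtain ⟨r, s, rfl⟩ := Ideal.mem_span_pair.mp hx
    have hx : (⟨r * a + s * b, hx⟩ : I) = r • ⟨a, ha⟩ + s • ⟨b, hb⟩ := rfl
    rw [hx, map_add, map_smul, map_smul, ← hsmul, ← hsmul]
    exact add_mem (Submodule.smul_mem _ _ (Submodule.subset_span ⟨0, rfl⟩))
      (Submodule.smul_mem _ _ (Submodule.subset_span ⟨1, rfl⟩))
  have hind : LinearIndependent (R ⧸ I) e := by
    refine Fintype.linearIndependent_iff.mpr fun c hc => ?_
    obtain ⟨r, hr⟩ := Ideal.Quotient.mk_surjective (c 0)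
    obtain ⟨s, hs⟩ := Ideal.Quotient.mk_surjective (c 1)
    rw [Fin.sum_univ_two, ← hr, ← hs, hsmul, hsmul] at hc
    obtain ⟨hrI, hsI⟩ := h r s ((I.toCotangent_eq_zero _).mp hc)
    intro i
    fin_cases i
    · exact hr ▸ Ideal.Quotient.eq_zero_iff_mem.mpr hrI
    · exact hs ▸ Ideal.Quotient.eq_zero_iff_mem.mpr hsI
  exact Module.Free.of_basis (Module.Basis.mk hind hspan)

local notation "H" => AddSubmonoid.closure ({5, 6, 9} : Set ℕ)

lemma mem_closure_569_of_le {n : ℕ} (hn : 14 ≤ n) : n ∈ H := by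
  induction n using Nat.strong_induction_on with
  | _ n ih =>
    by_cases h : n ≤ 18
    · interval_cases n
      · exact mem569 1 0 1 rfl
      · exact mem569 0 1 1 rfl
      · exact mem569 2 1 0 rfl
      · exact mem569 1 2 0 rfl
      · exact mem569 0 0 2 rfl
    · simpa [Nat.sub_add_cancel (by omega : 5 ≤ n)] using
        add_mem (ih (n - 5) (by omega) (by omega)) (mem569 1 0 0 rfl)

lemma notMem_closure_569 {n : ℕ}
    (hn : n = 1 ∨ n = 2 ∨ n = 3 ∨ n = 4 ∨ n = 7 ∨ n = 8 ∨ n = 13) : n ∉ H := by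
  let T : AddSubmonoid ℕ :=
    { carrier := {n | n = 0 ∨ n = 5 ∨ n = 6 ∨ (9 ≤ n ∧ n ≤ 12) ∨ 14 ≤ n}
      zero_mem' := Or.inl rfl
      add_mem' := by intro a b ha hb; simp only [Set.mem_ofPred_eq] at *; omega }
  have hT : H ≤ T := by
    rw [AddSubmonoid.closure_le]
    rintro x (rfl | rfl | rfl) <;> simp [T]
  intro h
  have := hT h
  simp [T] at this
  omega

section A569

variable (α β : k)

lemma coe_f569 : (f569 k α : PowerSeries k) = X ^ 6 + C α * X ^ 10 := by
  simp [f569, smul_eq_C_mul]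

lemma coe_g569 : (g569 k β : PowerSeries k) = X ^ 9 + C β * X ^ 10 := by
  simp [g569, smul_eq_C_mul]

lemma coeff_eq_zero_of_mem_A569 (y : A569 k) {n : ℕ}
    (hn : n = 1 ∨ n = 2 ∨ n = 3 ∨ n = 4 ∨ n = 7 ∨ n = 8 ∨ n = 13) :
    coeff n (y : PowerSeries k) = 0 :=
  coeff_eq_zero_of_mem_semigroupRing y.2 (notMem_closure_569 hn)

lemma mem_A569_of_X_pow_dvd {c : ℕ} (hc : 14 ≤ c) {p : PowerSeries k} (hp : X ^ c ∣ p) :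
    p ∈ A569 k :=
  mem_semigroupRing_of_X_pow_dvd (fun _ hn => mem_closure_569_of_le (hc.trans hn)) hp

lemma f569_mem_span : f569 k α ∈ Ideal.span {f569 k α, g569 k β} :=
  Ideal.subset_span (Set.mem_insert _ _)

lemma g569_mem_span : g569 k β ∈ Ideal.span {f569 k α, g569 k β} :=
  Ideal.subset_span (Set.mem_insert_of_mem _ rfl)

lemma mem_span_f569_of_X_pow_dvd (z : A569 k) (hz : X ^ 20 ∣ (z : PowerSeries k)) :
    z ∈ Ideal.span {f569 k α} := by
  obtain ⟨w, hw⟩ := hz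
  have hq : X ^ 14 * w * (1 + C α * X ^ 4)⁻¹ ∈ A569 k :=
    mem_A569_of_X_pow_dvd le_rfl (by rw [mul_assoc]; exact dvd_mul_right _ _)
  refine Ideal.mem_span_singleton'.mpr ⟨⟨_, hq⟩, Subtype.ext ?_⟩
  rw [Subalgebra.coe_mul, coe_f569, hw]
  linear_combination (X ^ 20 * w) * one_add_C_mul_X_pow_mul_inv α (i := 4) (by norm_num)

lemma mem_span_of_X_pow_eleven_dvd (z : A569 k) (hz : X ^ 11 ∣ (z : PowerSeries k)) :
    z ∈ Ideal.span {f569 k α, g569 k β} := by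
  have hf (j : ℕ) (hj : j ∈ H) := exists_mem_X_pow_dvd_coeff_eq_one (f569_mem_span α β) (i := 6)
    (u := 1 + C α * X ^ 4) (by rw [coe_f569]; ring) (by simp) hj
  have hg (j : ℕ) (hj : j ∈ H) := exists_mem_X_pow_dvd_coeff_eq_one (g569_mem_span α β) (i := 9)
    (u := 1 + C β * X) (by rw [coe_g569]; ring) (by simp) hj
  refine mem_of_X_pow_dvd_of_forall_exists (N := 20)
    (fun z hz => Ideal.span_mono (Set.singleton_subset_iff.mpr (Set.mem_insert _ _))
      (mem_span_f569_of_X_pow_dvd α z hz)) (fun m h11 h20 hm => ?_) z hz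
  interval_cases m
  · exact hf 5 (mem569 1 0 0 rfl)
  · exact hf 6 (mem569 0 1 0 rfl)
  · exact absurd hm (notMem_closure_569 (by norm_num))
  · exact hg 5 (mem569 1 0 0 rfl)
  · exact hf 9 (mem569 0 0 1 rfl)
  · exact hf 10 (mem569 2 0 0 rfl)
  · exact hf 11 (mem569 1 1 0 rfl)
  · exact hf 12 (mem569 0 2 0 rfl)
  · exact hg 10 (mem569 2 0 0 rfl)

lemma mem_span_of_coeff (y : A569 k) (h0 : coeff 0 (y : PowerSeries k) = 0)
    (h5 : coeff 5 (y : PowerSeries k) = 0)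
    (h10 : coeff 10 (y : PowerSeries k) =
      α * coeff 6 (y : PowerSeries k) + β * coeff 9 (y : PowerSeries k)) :
    y ∈ Ideal.span {f569 k α, g569 k β} := by
  set w := y - coeff 6 (y : PowerSeries k) • f569 k α - coeff 9 (y : PowerSeries k) • g569 k β
  have hw : X ^ 11 ∣ (w : PowerSeries k) := by
    refine X_pow_dvd_iff.mpr fun m hm => ?_
    have hgap := coeff_eq_zero_of_mem_A569 y (n := m)
    simp only [w, Subalgebra.coe_sub, Subalgebra.coe_smul, coe_f569, coe_g569, map_sub,
      coeff_smul, map_add, coeff_C_mul, coeff_X_pow, smul_eq_mul]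
    interval_cases m <;> simp_all
    ring
  have hI := (Ideal.span {f569 k α, g569 k β}).add_mem (mem_span_of_X_pow_eleven_dvd α β w hw)
    (add_mem (Submodule.smul_of_tower_mem _ (coeff 6 (y : PowerSeries k)) (f569_mem_span α β))
      (Submodule.smul_of_tower_mem _ (coeff 9 (y : PowerSeries k)) (g569_mem_span α β)))
  simpa only [w, sub_sub, sub_add_cancel] using hI

lemma g569_mul_self_mem (hβ : 2 * β = 0) :
    g569 k β * g569 k β ∈ Ideal.span {f569 k α} * Ideal.span {f569 k α, g569 k β} := by
  have hu := one_add_C_mul_X_pow_mul_inv α (i := 4) (by norm_num)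
  have h2β : (2 : PowerSeries k) * C β = 0 := by rw [← map_ofNat C 2, ← map_mul, hβ, map_zero]
  -- `g² / f = X¹²(1 + βX)²u⁻¹ = X¹² + X¹⁴r` with `u = 1 + αX⁴`, using `2β = 0` and
  -- `u⁻¹ = 1 - αX⁴u⁻¹`
  set r : PowerSeries k :=
    C (β ^ 2) - C α * X ^ 2 * (1 + C (β ^ 2) * X ^ 2) * (1 + C α * X ^ 4)⁻¹
  have hz : X ^ 12 + X ^ 14 * r ∈ A569 k :=
    add_mem (X_pow_mem k (mem569 0 2 0 rfl)) (mem_A569_of_X_pow_dvd le_rfl (dvd_mul_right _ _))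
  refine Ideal.mem_span_singleton_mul.mpr ⟨⟨_, hz⟩, mem_span_of_X_pow_eleven_dvd α β _ ?_, ?_⟩
  · exact dvd_add (pow_dvd_pow X (by norm_num))
      (dvd_mul_of_dvd_left (pow_dvd_pow X (by norm_num)) _)
  · refine Subtype.ext ?_
    simp only [Subalgebra.coe_mul, coe_f569, coe_g569, r, map_pow]
    linear_combination (-(C α * X ^ 22 * (1 + C β ^ 2 * X ^ 2))) * hu - X ^ 19 * h2β

lemma span_pair_sq_eq (hβ : 2 * β = 0) :
    Ideal.span {f569 k α, g569 k β} ^ 2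
      = Ideal.span {f569 k α} * Ideal.span {f569 k α, g569 k β} := by
  refine le_antisymm ?_ (pow_two (Ideal.span {f569 k α, g569 k β}) ▸
    Ideal.mul_mono_left (Ideal.span_mono (Set.singleton_subset_iff.mpr (Set.mem_insert _ _))))
  rw [pow_two, Ideal.mul_le]
  intro x hx y hy
  obtain ⟨a, b, rfl⟩ := Ideal.mem_span_pair.mp hx
  obtain ⟨c, d, rfl⟩ := Ideal.mem_span_pair.mp hy
  have hexp : (a * f569 k α + b * g569 k β) * (c * f569 k α + d * g569 k β)
      = f569 k α * (a * c * f569 k α + (a * d + b * c) * g569 k β)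
        + b * d * (g569 k β * g569 k β) := by ring
  rw [hexp]
  exact add_mem (Ideal.mul_mem_mul (Ideal.mem_span_singleton_self _)
      (Ideal.mem_span_pair.mpr ⟨_, _, rfl⟩))
    (Ideal.mul_mem_left _ _ (g569_mul_self_mem α β hβ))

lemma span_pair_ne_span_f569 : Ideal.span {f569 k α, g569 k β} ≠ Ideal.span {f569 k α} := by
  intro h
  obtain ⟨c, hc⟩ := Ideal.mem_span_singleton'.mp (h ▸ g569_mem_span α β)
  have h9 := congrArg (fun x : A569 k => coeff 9 (x : PowerSeries k)) hc
  simp only [Subalgebra.coe_mul, coe_f569, coe_g569, coeff_mul_X_pow_add_C_mul_X_pow] at h9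
  norm_num [coeff_X_pow] at h9
  exact one_ne_zero (h9.symm.trans (coeff_eq_zero_of_mem_A569 c (by norm_num)))

lemma radical_span_pair_eq :
    (Ideal.span {f569 k α, g569 k β}).radical = maximalIdealOf k (A569 k) := by
  refine le_antisymm ?_ fun x hx => ⟨4, ?_⟩
  · rw [(maximalIdealOf_isMaximal _).isPrime.radical_le_iff, Ideal.span_le]
    rintro x (rfl | rfl) <;>
      simp [maximalIdealOf, RingHom.mem_ker, coe_f569, coe_g569]
  · have hx0 : coeff 0 (x : PowerSeries k) = 0 := by simpa [maximalIdealOf] using hx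
    have hx5 : X ^ 5 ∣ (x : PowerSeries k) := X_pow_dvd_iff.mpr fun m hm => by
      interval_cases m
      exacts [hx0, coeff_eq_zero_of_mem_A569 x (by norm_num),
        coeff_eq_zero_of_mem_A569 x (by norm_num), coeff_eq_zero_of_mem_A569 x (by norm_num),
        coeff_eq_zero_of_mem_A569 x (by norm_num)]
    refine Ideal.span_mono (Set.singleton_subset_iff.mpr (Set.mem_insert _ _))
      (mem_span_f569_of_X_pow_dvd α _ ?_)
    simpa [← pow_mul] using pow_dvd_pow_of_dvd hx5 4

lemma mem_span_of_mul_g569_eq_mul_f569 (hβ : 2 * β = 0) {s m : A569 k}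
    (h : s * g569 k β = m * f569 k α) :
    s ∈ Ideal.span {f569 k α, g569 k β} ∧ m ∈ Ideal.span {f569 k α, g569 k β} := by
  have E (n : ℕ) := congrArg (fun x : A569 k => coeff n (x : PowerSeries k)) h
  simp only [Subalgebra.coe_mul, coe_f569, coe_g569, coeff_mul_X_pow_add_C_mul_X_pow] at E
  have gs (n : ℕ) := coeff_eq_zero_of_mem_A569 s (n := n)
  have gm (n : ℕ) := coeff_eq_zero_of_mem_A569 m (n := n)
  have e6 := E 6; have e9 := E 9; have e11 := E 11; have e12 := E 12
  have e14 := E 14; have e15 := E 15; have e16 := E 16; have e19 := E 19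
  norm_num [gs, gm] at e6 e9 e11 e12 e14 e15 e16 e19
  refine ⟨mem_span_of_coeff α β s (by simpa using e9) e14 ?_,
    mem_span_of_coeff α β m (by simpa using e6.symm) e11.symm ?_⟩
  · linear_combination e19 - α * e15 + α * β * e14 + α ^ 2 * e11 - coeff 9 (s : PowerSeries k) * hβ
  · linear_combination -e16 + β * e15 + 2 * α * e12 - β ^ 2 * e14 - α * β * e11

lemma mem_span_of_mul_add_mul_mem_sq (hβ : 2 * β = 0) (r s : A569 k)
    (h : r * f569 k α + s * g569 k β ∈ Ideal.span {f569 k α, g569 k β} ^ 2) :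
    r ∈ Ideal.span {f569 k α, g569 k β} ∧ s ∈ Ideal.span {f569 k α, g569 k β} := by
  rw [span_pair_sq_eq α β hβ] at h
  obtain ⟨z, hzI, hz⟩ := Ideal.mem_span_singleton_mul.mp h
  obtain ⟨hs, hm⟩ := mem_span_of_mul_g569_eq_mul_f569 α β hβ (s := s) (m := z - r)
    (by linear_combination hz.symm)
  exact ⟨by simpa using Ideal.sub_mem _ hzI hm, hs⟩

end A569

/-- for `α, β ∈ k` with `2β = 0`, the ideal
`(t⁶ + αt¹⁰, t⁹ + βt¹⁰)` of `A = k⟦t⁵,t⁶,t⁹⟧` is an Ulrich ideal. -/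
theorem ulrich_ideal_569_of_normal_form (α β : k) (hβ : 2 * β = 0) :
    IsUlrichIdeal k (A569 k) (Ideal.span {f569 k α, g569 k β}) := by
  have hrad := radical_span_pair_eq α β
  have hsq := span_pair_sq_eq α β hβ
  refine ⟨Ideal.isPrimary_of_isMaximal_radical (hrad ▸ maximalIdealOf_isMaximal _), hrad,
    f569 k α, f569_mem_span α β, ⟨1, by rwa [pow_one]⟩, span_pair_ne_span_f569 α β, hsq,
    Ideal.free_cotangent_of_span_pair (mem_span_of_mul_add_mul_mem_sq α β hβ)⟩
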